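/- For the transformation G(Γ) := Γ ∪ ⋃_{i=1}^{t} [(x_i ∨ Γ) ∪ (¬x_i ∨ Γ)] with x₁,…,x_t variables not in Γ: if Γ is unsatisfiable, then no clause C containing a literal of some x_i (and using only variables of G(Γ)) is a blocked clause for that literal with respect to G(Γ). -/

import Mathlib

open Classical

abbrev Var := ℕ
abbrev Lit := Var × Bool

def negLit (l : Lit) : Lit := (l.1, !l.2)

abbrev Clause := Finset Lit

/-- A set of literals is tautological if it contains a complementary pair. -/
def Tauto (S : Finset Lit) : Prop := ∃ l ∈ S, negLit l ∈ S

abbrev CNF := Set Clause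

abbrev Assign := Var → Bool

def SatLit (α : Assign) (l : Lit) : Prop := α l.1 = l.2
def SatClause (α : Assign) (C : Clause) : Prop := ∃ l ∈ C, SatLit α l
def SatCNF (α : Assign) (Γ : CNF) : Prop := ∀ C ∈ Γ, SatClause α C
def Satisfiable (Γ : CNF) : Prop := ∃ α, SatCNF α Γ
def Equisat (Γ Δ : CNF) : Prop := Satisfiable Γ ↔ Satisfiable Δ

/-- `C` is a blocked clause for the literal `p` with respect to `Γ`. -/
def Blocked (C : Clause) (p : Lit) (Γ : CNF) : Prop :=
  p ∈ C ∧ ∀ D ∈ Γ, negLit p ∈ D → Tauto (C.erase p ∪ D.erase (negLit p))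

def negSet (L : Finset Lit) : Finset Lit := L.image negLit

/-- `C` is a set-blocked clause for `L` with respect to `Γ`. -/
def SetBlocked (C : Clause) (L : Finset Lit) (Γ : CNF) : Prop :=
  L.Nonempty ∧ L ⊆ C ∧
    ∀ D ∈ Γ, (D ∩ negSet L).Nonempty → D ∩ L = ∅ →
      Tauto ((C \ L) ∪ (D \ negSet L))

def varsClause (C : Clause) : Finset Var := C.image Prod.fst
def varsCNF (Γ : CNF) : Set Var := {v | ∃ C ∈ Γ, v ∈ varsClause C}

/-- Partial assignments. -/
abbrev PAssign := Var → Option Bool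

def restrictClause (α : PAssign) (C : Clause) : Clause :=
  C.filter fun l => α l.1 ≠ some (!l.2)

def PSatClause' (α : PAssign) (C : Clause) : Prop := ∃ l ∈ C, α l.1 = some l.2

def restrictCNF (α : PAssign) (Γ : CNF) : CNF :=
  {E | ∃ C ∈ Γ, ¬ PSatClause' α C ∧ E = restrictClause α C}

/-- `E` is a resolvent of `F` and `G`. -/
def Resolvent (E F G : Clause) : Prop :=
  ∃ (x : Var) (A B : Clause), x ∉ varsClause A ∧ x ∉ varsClause B ∧
    F = insert (x, true) A ∧ G = insert (x, false) B ∧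
    E = A ∪ B ∧ ¬ Tauto (A ∪ B)

/-- One step of a resolution proof: add a resolvent or a weakening. -/
def ResStep (Γ Γ' : CNF) : Prop :=
  ∃ C, Γ' = Γ ∪ {C} ∧
    ((∃ F ∈ Γ, ∃ G ∈ Γ, Resolvent C F G) ∨ (∃ D ∈ Γ, D ⊆ C ∧ ¬ Tauto C))

/-- A resolution proof (refutation) of `Γ`. -/
def ResProofOf (Γ : CNF) (prf : List CNF) : Prop :=
  prf.head? = some Γ ∧ (∃ Δ, prf.getLast? = some Δ ∧ (∅ : Clause) ∈ Δ) ∧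
    List.Chain' ResStep prf

/-- One step of a unit propagation proof: resolve against a unit clause, or weaken. -/
def UnitStep (Γ Γ' : CNF) : Prop :=
  ∃ C, Γ' = Γ ∪ {C} ∧
    ((∃ l, ({negLit l} : Clause) ∈ Γ ∧ l.1 ∉ varsClause C ∧ insert l C ∈ Γ)
      ∨ (∃ D ∈ Γ, D ⊆ C ∧ ¬ Tauto C))

/-- `Γ` has a unit propagation refutation. -/
def UPRefutes (Γ : CNF) : Prop :=
  ∃ prf : List CNF, prf.head? = some Γ ∧ (∃ Δ, prf.getLast? = some Δ ∧ (∅ : Clause) ∈ Δ) ∧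
    List.Chain' UnitStep prf

def negUnits (L : Finset Lit) : CNF := {C | ∃ p ∈ L, C = {negLit p}}

/-- `Γ ⊢₁ C`. -/
def UPDerives (Γ : CNF) (C : Clause) : Prop := UPRefutes (Γ ∪ negUnits C)

/-- Partial assignments as consistent sets of literals. -/
def Consistent (α : Set Lit) : Prop := ∀ l ∈ α, negLit l ∉ α
def PSatClause (α : Set Lit) (C : Clause) : Prop := ∃ l ∈ C, l ∈ α
def PSatCNF (α : Set Lit) (Γ : CNF) : Prop := ∀ C ∈ Γ, PSatClause α C
def MinSat (α : Set Lit) (Γ : CNF) : Prop :=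
  Consistent α ∧ PSatCNF α Γ ∧ ∀ β ⊂ α, ¬ PSatCNF β Γ

/-- `μ(Γ)`: clauses whose negation minimally satisfies `Γ`. -/
def mu (Γ : CNF) : CNF := {E | MinSat (↑(E.image negLit)) Γ}

/-- Projection of `Γ` onto a literal. -/
def proj (p : Lit) (Γ : CNF) : CNF := {E | ∃ D ∈ Γ, p ∈ D ∧ E = D.erase p}

/-- The transformation `G(Γ)`. -/
def Gtrans (Γ : CNF) (t : ℕ) (xs : Fin t → Var) : CNF :=
  Γ ∪ {E | ∃ (i : Fin t) (D : Clause), D ∈ Γ ∧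
        (E = insert (xs i, true) D ∨ E = insert (xs i, false) D)}

/-!
If `C` is blocked for `p` with respect to `Δ`, then the assignment falsifying `C' = C \ {p}`
satisfies the projection `proj_{¬p}(Δ)`: each clause `D \ {¬p}` of it forms a tautology together
with `C'`, so it contains the complement of a literal of `C'` (or is itself a tautology).
For a literal `p` of a fresh variable `x_i`, that projection of `G(Γ)` contains `Γ`, which is
therefore satisfiable.
-/

theorem negLit_negLit (l : Lit) : negLit (negLit l) = l := by
  simp [negLit]

theorem satLit_negLit_iff {α : Assign} {l : Lit} : SatLit α (negLit l) ↔ ¬ SatLit α l := by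
  simp only [SatLit, negLit]
  cases α l.1 <;> cases l.2 <;> decide

theorem Tauto.mono {S T : Finset Lit} (hST : S ⊆ T) : Tauto S → Tauto T
  | ⟨l, hl, hnl⟩ => ⟨l, hST hl, hST hnl⟩

theorem SatClause.of_tauto (α : Assign) {D : Clause} : Tauto D → SatClause α D
  | ⟨l, hl, hnl⟩ => by
    by_cases h : SatLit α l
    · exact ⟨l, hl, h⟩
    · exact ⟨negLit l, hnl, satLit_negLit_iff.2 h⟩

theorem SatCNF.mono {α : Assign} {Γ Δ : CNF} (hΓΔ : Γ ⊆ Δ) (h : SatCNF α Δ) : SatCNF α Γ :=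
  fun D hD => h D (hΓΔ hD)

def falsify (C : Clause) : Assign := fun v => decide ((v, true) ∉ C)

theorem satLit_falsify_negLit {C : Clause} (hC : ¬ Tauto C) {l : Lit} (hl : l ∈ C) :
    SatLit (falsify C) (negLit l) := by
  obtain ⟨v, b⟩ := l
  cases b
  · have hvt : ((v, true) : Lit) ∉ C := fun hvt => hC ⟨(v, true), hvt, hl⟩
    simpa [SatLit, negLit, falsify] using hvt
  · simpa [SatLit, negLit, falsify] using hl

theorem satClause_falsify_of_tauto_union {C D : Clause} (hC : ¬ Tauto C)
    (h : Tauto (C ∪ D)) : SatClause (falsify C) D := by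
  obtain ⟨l, hl, hnl⟩ := h
  rcases Finset.mem_union.1 hl with hlC | hlD <;> rcases Finset.mem_union.1 hnl with hnlC | hnlD
  · exact absurd ⟨l, hlC, hnlC⟩ hC
  · exact ⟨negLit l, hnlD, satLit_falsify_negLit hC hlC⟩
  · exact ⟨l, hlD, negLit_negLit l ▸ satLit_falsify_negLit hC hnlC⟩
  · exact SatClause.of_tauto _ ⟨l, hlD, hnlD⟩

theorem Blocked.satCNF_falsify_proj {C : Clause} {p : Lit} {Δ : CNF} (hbl : Blocked C p Δ)
    (hC : ¬ Tauto (C.erase p)) : SatCNF (falsify (C.erase p)) (proj (negLit p) Δ) := by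
  rintro _ ⟨D, hD, hpD, rfl⟩
  exact satClause_falsify_of_tauto_union hC (hbl.2 D hD hpD)

theorem subset_proj_Gtrans {Γ : CNF} {t : ℕ} {xs : Fin t → Var} {i : Fin t}
    (hxi : xs i ∉ varsCNF Γ) {p : Lit} (hp : p.1 = xs i) : Γ ⊆ proj p (Gtrans Γ t xs) := by
  intro D hD
  have hpD : p ∉ D := fun hpD => hxi ⟨D, hD, hp ▸ Finset.mem_image_of_mem Prod.fst hpD⟩
  refine ⟨insert p D, Or.inr ⟨i, D, hD, ?_⟩, Finset.mem_insert_self p D,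
    (Finset.erase_insert hpD).symm⟩
  obtain ⟨v, b⟩ := p
  subst hp
  cases b
  · exact Or.inr rfl
  · exact Or.inl rfl

theorem Gtrans_no_blocked_on_new_general (Γ : CNF)
    (t : ℕ) (xs : Fin t → Var) (hxs : ∀ i, xs i ∉ varsCNF Γ)
    (hunsat : ¬ Satisfiable Γ)
    (C : Clause) (hC : ¬ Tauto C) (p : Lit) (i : Fin t) (hp : p.1 = xs i) :
    ¬ Blocked C p (Gtrans Γ t xs) := fun hbl =>
  have hC' : ¬ Tauto (C.erase p) := fun h => hC (h.mono (Finset.erase_subset p C))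
  have hnp : (negLit p).1 = xs i := hp
  hunsat ⟨_, (hbl.satCNF_falsify_proj hC').mono (subset_proj_Gtrans (hxs i) hnp)⟩

/-- for unsatisfiable `Γ`, no clause is blocked for a literal of a
new variable `x_i` with respect to `G(Γ)`. -/
theorem Gtrans_no_blocked_on_new (Γ : CNF) (hΓ : ∀ D ∈ Γ, ¬ Tauto D)
    (t : ℕ) (xs : Fin t → Var) (hxs : ∀ i, xs i ∉ varsCNF Γ)
    (hunsat : ¬ Satisfiable Γ)
    (C : Clause) (hC : ¬ Tauto C) (p : Lit) (i : Fin t) (hp : p.1 = xs i)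
    (hpC : p ∈ C) (hvars : ↑(varsClause C) ⊆ varsCNF (Gtrans Γ t xs)) :
    ¬ Blocked C p (Gtrans Γ t xs) :=
  Gtrans_no_blocked_on_new_general Γ t xs hxs hunsat C hC p i hp
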